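/- Let c ∈ ℕ and let the weighted system (N,R,wt,K) be c-closed. For every l ∈ ℕ, every D ⊆ T_R^{(c)}, and every D' ⊆ T_R \ T_R^{(c)} the following holds: if ⋃_{d∈D'}(cotrees(d) ∩ T_R^{(c)}) ⊆ D, then for every B ⊆ D' with |B| = l: ⊕_{d∈D} wt(d)_K ⊕ Σ_{d∈D'} wt(d)_K = ⊕_{d∈D} wt(d)_K ⊕ Σ_{d∈D'∖B} wt(d)_K (here D is finite since T_R^{(c)} is finite, and D' is countable since T_R is countable). -/

import Mathlib

open scoped Classical

/-- Trees over a ranked set `R` with arity function `ar`: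
`RT.node r ts` is a tree whose root is labelled `r` and which has `ar r` children. -/
inductive RT (R : Type) (ar : R → ℕ) : Type
  | node (r : R) (children : Fin (ar r) → RT R ar)

namespace RT

variable {R : Type} {ar : R → ℕ}

/-- The rule labelling the root of a tree. -/
def rootRule : RT R ar → R
  | node r _ => r

/-- The subtree at a position (`none` if the position is not a position of the tree). -/
def subAt : RT R ar → List ℕ → Option (RT R ar)
  | t, [] => some t
  | node r ts, i :: p => if h : i < ar r then subAt (ts ⟨i, h⟩) p else none

/-- Replace the subtree at a position by another tree. -/
def replaceAt : RT R ar → List ℕ → RT R ar → RT R ar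
  | _, [], s => s
  | node r ts, i :: p, s => node r fun j => if j.1 = i then replaceAt (ts j) p s else ts j

/-- The sequence of rule labels from the root to a position, inclusive. -/
def seqTo : RT R ar → List ℕ → Option (List R)
  | node r _, [] => some [r]
  | node r ts, i :: p => if h : i < ar r then (seqTo (ts ⟨i, h⟩) p).map (fun l => r :: l) else none

/-- `p` is a leaf position of `d`, i.e. a valid position with no child positions. -/
def LeafAt (d : RT R ar) (p : List ℕ) : Prop :=
  ∃ t, subAt d p = some t ∧ ar t.rootRule = 0

/-- The height of a tree: `0` on nullary nodes, otherwise `1` plus the maximum height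
of the direct subtrees. -/
def height : RT R ar → ℕ
  | node _ ts => Finset.univ.sup fun i => height (ts i) + 1

end RT

/-- The weight of a tree: evaluate it bottom-up, interpreting each rule `r` by the
operation `wt r`. -/
def wtval {K R : Type} {ar : R → ℕ} (wt : ∀ r : R, (Fin (ar r) → K) → K) : RT R ar → K
  | .node r ts => wt r fun i => wtval wt (ts i)

section Cyclicity

variable {R : Type} {ar : R → ℕ}

/-- A string over `R` is an elementary cycle if it has length `> 1`, its first and last
symbols coincide, and it becomes repetition-free after deleting its last (resp. first)
symbol. -/
def ElementaryCycle (w : List R) : Prop :=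
  1 < w.length ∧ w.head? = w.getLast? ∧ w.dropLast.Nodup ∧ w.tail.Nodup

/-- `ρ` is `(c,w)`-cyclic: `ρ = v₀ w v₁ ⋯ w v_c` (with `c` occurrences of the elementary
cycle `w`) where `w` is not an infix of any `vᵢ`. -/
def CWCyclic (c : ℕ) (w ρ : List R) : Prop :=
  ElementaryCycle w ∧
  ∃ v : ℕ → List R,
    ρ = v 0 ++ (((List.range c).map fun i => w ++ v (i + 1)).flatten) ∧
    ∀ i ≤ c, ¬ w <:+: v i

/-- `ρ` is `c`-cyclic: it is `(c,w)`-cyclic for some elementary cycle `w` and not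
`(c',w')`-cyclic for any `c' > c` and elementary cycle `w'`. -/
def CCyclic (c : ℕ) (ρ : List R) : Prop :=
  (∃ w, CWCyclic c w ρ) ∧ ∀ c', c < c' → ∀ w', ¬ CWCyclic c' w' ρ

/-- The leaf position `p` of `d` is `(c,w)`-cyclic. -/
def LeafCW (c : ℕ) (w : List R) (d : RT R ar) (p : List ℕ) : Prop :=
  RT.LeafAt d p ∧ ∃ ρ, RT.seqTo d p = some ρ ∧ CWCyclic c w ρ

/-- The leaf position `p` of `d` is `c`-cyclic. -/
def LeafC (c : ℕ) (d : RT R ar) (p : List ℕ) : Prop :=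
  RT.LeafAt d p ∧ ∃ ρ, RT.seqTo d p = some ρ ∧ CCyclic c ρ

/-- The tree `d` is `c`-cyclic: some leaf of `d` is `c`-cyclic and no leaf of `d` is
`c'`-cyclic for any `c' > c`. -/
def TreeC (c : ℕ) (d : RT R ar) : Prop :=
  (∃ p, LeafC c d p) ∧ ∀ c', c < c' → ∀ p, ¬ LeafC c' d p

/-- `d ⊢_w d'` : there are positions `p ≤ p'` of `d` whose connecting label sequence is
`w`, and `d'` is obtained by replacing the subtree at `p` by the subtree at `p'`.
(The position `p'` is `p ++ q`.) -/
def CutW (w : List R) (d d' : RT R ar) : Prop :=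
  ∃ p q t s, RT.subAt d p = some t ∧ RT.subAt t q = some s ∧
    RT.seqTo t q = some w ∧ d' = RT.replaceAt d p s

/-- `d ⊢ d'` : `d ⊢_w d'` for some elementary cycle `w`. -/
def Cut (d d' : RT R ar) : Prop := ∃ w, ElementaryCycle w ∧ CutW w d d'

/-- The set of `w`-cutout trees of `d`. -/
def cotreesW (w : List R) (d : RT R ar) : Set (RT R ar) := {d' | Relation.TransGen (CutW w) d d'}

/-- The set of cutout trees of `d`. -/
def cotrees (d : RT R ar) : Set (RT R ar) := {d' | Relation.TransGen Cut d d'}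

end Cyclicity

section Rules

variable {N R : Type}

/-- Well-sorted trees over a rule system given by `lhs` and `rhs`: at each node labelled
`r`, the `i`-th child is a well-sorted tree whose root label has left-hand side equal to
the `i`-th nonterminal of `rhs r`. -/
inductive WellSorted (lhs : R → N) (rhs : R → List N) :
    RT R (fun r => (rhs r).length) → Prop
  | node (r : R) (ts : Fin (rhs r).length → RT R fun r => (rhs r).length)
      (hsort : ∀ i, lhs (ts i).rootRule = (rhs r).get i)
      (hrec : ∀ i, WellSorted lhs rhs (ts i)) : WellSorted lhs rhs (RT.node r ts)

/-- `T_R` : the set of (well-sorted) trees over the rule system. -/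
def TRset (lhs : R → N) (rhs : R → List N) : Set (RT R fun r => (rhs r).length) :=
  {d | WellSorted lhs rhs d}

/-- `(T_R)_A` : the set of trees of sort `A`. -/
def TRA (lhs : R → N) (rhs : R → List N) (A : N) : Set (RT R fun r => (rhs r).length) :=
  {d | WellSorted lhs rhs d ∧ lhs d.rootRule = A}

/-- `T_R^{(c)}` : the set of trees that are `c'`-cyclic for some `c' ≤ c`. -/
def TRcset (lhs : R → N) (rhs : R → List N) (c : ℕ) : Set (RT R fun r => (rhs r).length) :=
  {d | WellSorted lhs rhs d ∧ ∃ c' ≤ c, TreeC c' d}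

end Rules

/-- An infinitary sum operation on a commutative monoid `K`, turning it into a complete
monoid: the sum of the empty family is `0`, the sum of a singleton family is its member,
the sum of a two-element family is the binary sum, and the partition law holds (every
partition of a countable index set `I` into sets indexed by `J` is given by the fibers
of a map `g : I → J`). -/
structure InfSum (K : Type) [AddCommMonoid K] where
  isum : ∀ {I : Type} [Countable I], (I → K) → K
  isum_empty : ∀ {I : Type} [Countable I] (f : I → K), IsEmpty I → isum f = 0
  isum_single : ∀ {I : Type} [Countable I] (f : I → K) (j : I), (∀ i, i = j) → isum f = f j
  isum_pair : ∀ {I : Type} [Countable I] (f : I → K) (j j' : I), j ≠ j' →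
    (∀ i, i = j ∨ i = j') → isum f = f j + f j'
  isum_partition : ∀ {I J : Type} [Countable I] [Countable J] (f : I → K) (g : I → J),
    isum f = isum fun j : J => isum fun i : {i : I // g i = j} => f i.1

section MMonoid

variable {K : Type} [AddCommMonoid K]

/-- A complete monoid is d-complete if, whenever all the partial sums `Σ_{i ≤ n} f i`
eventually equal `k`, the infinitary sum of the family equals `k`. -/
def InfSum.DComplete (S : InfSum K) : Prop :=
  ∀ (k : K) (f : ℕ → K),
    (∃ n₀ : ℕ, ∀ n, n₀ ≤ n → (∑ i ∈ Finset.range (n + 1), f i) = k) → S.isum f = k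

/-- A complete monoid is completely idempotent if the infinitary sum of every constant
family over a nonempty countable index set is that constant. -/
def InfSum.CompletelyIdempotent (S : InfSum K) : Prop :=
  ∀ (I : Type) [Countable I], Nonempty I → ∀ k : K, S.isum (fun _ : I => k) = k

/-- The family `Ω` of operation sets contains all the null (constantly `0`) operations. -/
def HasZeroOps (Ω : ∀ n : ℕ, Set ((Fin n → K) → K)) : Prop :=
  ∀ n : ℕ, (fun _ : Fin n → K => (0 : K)) ∈ Ω n

/-- Distributivity of an M-monoid: every operation in `Ω` distributes over `+` in each
argument, and `0` is absorbing for every operation in `Ω`. -/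
def DistributiveOps (Ω : ∀ n : ℕ, Set ((Fin n → K) → K)) : Prop :=
  ∀ n : ℕ, ∀ ω ∈ Ω n,
    (∀ (x : Fin n → K) (i : Fin n) (a b : K),
      ω (Function.update x i (a + b)) = ω (Function.update x i a) + ω (Function.update x i b)) ∧
    (∀ x : Fin n → K, (∃ i, x i = 0) → ω x = 0)

end MMonoid

/-- The weighted system `(N, R, wt, K)` is `c`-closed: for every well-sorted tree `d` and
elementary cycle `w` such that some leaf position of `d` is `(c+1,w)`-cyclic, the weight
of `d` is subsumed by the (finite) `⊕`-sum of the weights of the `w`-cutout trees of `d`. -/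
def CClosed {K : Type} [AddCommMonoid K] {N R : Type} (lhs : R → N) (rhs : R → List N)
    (wt : ∀ r : R, (Fin (rhs r).length → K) → K) (c : ℕ) : Prop :=
  ∀ d : RT R (fun r => (rhs r).length), WellSorted lhs rhs d →
    ∀ w : List R, ElementaryCycle w → (∃ p, LeafCW (c + 1) w d p) →
      (wtval wt d + ∑ᶠ d' ∈ cotreesW w d, wtval wt d') = ∑ᶠ d' ∈ cotreesW w d, wtval wt d'

/-!
Removing the trees of `B` one at a time, it suffices that `F = ⊕_{d ∈ D} wt(d)` absorbs the
weight of every well-sorted tree `d ∉ T_R^{(c)}` whose at most `c`-cyclic cutout trees lie in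
`D`, i.e. `F ⊕ wt(d) = F`. Some leaf of `d` is more than `c`-cyclic, so some subtree `t` of `d`
has a `(c+1, w)`-cyclic leaf, and `c`-closedness absorbs `wt(t)` into the sum over the
`w`-cutout trees of `t`. By distributivity `wt(d)` is an additive function of `wt(t)`, so
`wt(d)` is absorbed into the sum over the trees obtained from `d` by cutting inside `t`. Those
in `D` occur in `F`; the others are smaller cutout trees of `d` outside `T_R^{(c)}`, absorbed by
induction on the size. `F` is a genuine finite sum because `c`-cyclic trees have bounded
height: by pigeonhole, a long label sequence contains `c + 1` disjoint occurrences of one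
elementary cycle.
-/

section Strings

variable {R : Type}

lemma ElementaryCycle.length_pos {w : List R} (hw : ElementaryCycle w) : 0 < w.length := by
  have := hw.1
  omega

lemma elementaryCycle_pair (a : R) : ElementaryCycle [a, a] :=
  ⟨by simp, rfl, by simp, by simp⟩

lemma ElementaryCycle.length_le_card [Fintype R] {w : List R} (hw : ElementaryCycle w) :
    w.length ≤ Fintype.card R + 1 := by
  have := hw.2.2.1.length_le_card
  rw [List.length_dropLast] at this
  omega

lemma finite_setOf_elementaryCycle [Fintype R] : {w : List R | ElementaryCycle w}.Finite :=
  (List.finite_length_le R _).subset fun _ hw => ElementaryCycle.length_le_card hw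

noncomputable def elementaryCycles (R : Type) [Fintype R] : Finset (List R) :=
  finite_setOf_elementaryCycle.toFinset

lemma mem_elementaryCycles [Fintype R] {w : List R} :
    w ∈ elementaryCycles R ↔ ElementaryCycle w :=
  Set.Finite.mem_toFinset _

lemma exists_elementaryCycle_infix : ∀ {σ : List R}, ¬ σ.Nodup →
    ∃ w, ElementaryCycle w ∧ w <:+: σ
  | [], h => absurd List.nodup_nil h
  | a :: l, h => by
    by_cases hl : l.Nodup
    · obtain ⟨u, v, rfl⟩ := List.append_of_mem (by simpa [hl] using h : a ∈ l)
      have hu : (u ++ [a]).Nodup := hl.sublist (by simp)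
      have hau : a ∉ u := fun h => (List.nodup_append.1 hu).2.2 a h a (by simp) rfl
      refine ⟨(a :: u) ++ [a], ⟨by simp, List.getLast?_concat.symm, ?_, hu⟩,
        [], v, by simp⟩
      rw [List.dropLast_concat]
      exact List.nodup_cons.2 ⟨hau, hu.sublist (by simp)⟩
    · obtain ⟨w, hw, hwl⟩ := exists_elementaryCycle_infix hl
      exact ⟨w, hw, hwl.trans (List.suffix_cons a l).isInfix⟩

lemma CWCyclic.length_le {k : ℕ} {w ρ : List R} (h : CWCyclic k w ρ) : k ≤ ρ.length := by
  obtain ⟨hw, v, rfl, -⟩ := h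
  have := List.length_le_sum_of_one_le
    (((List.range k).map fun i => w ++ v (i + 1)).map List.length) (by
      simp only [List.mem_map, List.mem_range]
      rintro _ ⟨_, ⟨i, -, rfl⟩, rfl⟩
      simp only [List.length_append]
      have := hw.length_pos
      omega)
  simp only [List.length_map, List.length_range] at this
  simp only [List.length_append, List.length_flatten]
  omega

lemma CWCyclic.zero {w ρ : List R} (hw : ElementaryCycle w) (h : ¬ w <:+: ρ) :
    CWCyclic 0 w ρ :=
  ⟨hw, fun _ => ρ, by simp, fun _ _ => h⟩

lemma CWCyclic.append {k : ℕ} {w s t : List R} (hs : ¬ w <:+: s) (h : CWCyclic k w t) :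
    CWCyclic (k + 1) w (s ++ w ++ t) := by
  obtain ⟨hw, v, rfl, hv⟩ := h
  refine ⟨hw, fun | 0 => s | j + 1 => v j, ?_, ?_⟩
  · simp [List.range_succ_eq_map, Function.comp_def]
  · rintro (_ | i) hi
    · exact hs
    · exact hv i (by omega)

lemma CWCyclic.exists_suffix_of_succ {k : ℕ} {w ρ : List R} (h : CWCyclic (k + 1) w ρ) :
    ∃ ρ', ρ' <:+ ρ ∧ CWCyclic k w ρ' := by
  obtain ⟨hw, v, rfl, hv⟩ := h
  refine ⟨_, ⟨v 0 ++ w, ?_⟩, hw, fun j => v (j + 1), rfl, fun i hi => hv _ (by omega)⟩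
  simp [List.range_succ_eq_map, Function.comp_def]

lemma CWCyclic.exists_suffix {k m : ℕ} {w ρ : List R} (h : CWCyclic m w ρ) (hk : k ≤ m) :
    ∃ ρ', ρ' <:+ ρ ∧ CWCyclic k w ρ' := by
  obtain ⟨j, rfl⟩ := Nat.exists_eq_add_of_le hk
  induction j generalizing ρ with
  | zero => exact ⟨ρ, List.suffix_refl ρ, h⟩
  | succ j ih =>
    obtain ⟨ρ', hρ', h'⟩ := h.exists_suffix_of_succ
    obtain ⟨ρ'', hρ'', h''⟩ := ih h' (by omega)
    exact ⟨ρ'', hρ''.trans hρ', h''⟩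

/-- The degrees of the decompositions of `ρ` are bounded by its length, so a largest one
exists. -/
lemma CWCyclic.exists_cCyclic_ge {k : ℕ} {w ρ : List R} (h : CWCyclic k w ρ) :
    ∃ m, k ≤ m ∧ CCyclic m ρ := by
  let P k := ∃ w, CWCyclic k w ρ
  refine ⟨Nat.findGreatest P ρ.length, Nat.le_findGreatest (P := P) h.length_le ⟨w, h⟩,
    Nat.findGreatest_spec (P := P) h.length_le ⟨w, h⟩, fun c' hc' w' h' => ?_⟩
  have := Nat.le_findGreatest (P := P) h'.length_le ⟨w', h'⟩
  omega

def HasDisjointInfixes (w : List R) : ℕ → List R → Prop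
  | 0, _ => True
  | n + 1, ρ => ∃ x y, ρ = x ++ w ++ y ∧ HasDisjointInfixes w n y

lemma HasDisjointInfixes.append_left {w ρ : List R} {n : ℕ} (h : HasDisjointInfixes w n ρ)
    (z : List R) : HasDisjointInfixes w n (z ++ ρ) := by
  cases n with
  | zero => trivial
  | succ n =>
    obtain ⟨x, y, rfl, hy⟩ := h
    exact ⟨z ++ x, y, by simp, hy⟩

lemma exists_first_infix {w ρ : List R} (hw : w ≠ []) (h : w <:+: ρ) :
    ∃ s t, ρ = s ++ w ++ t ∧ ¬ w <:+: s ∧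
      ∀ x y, ρ = x ++ w ++ y → s.length ≤ x.length := by
  have hex : ∃ n, ∃ x y, x.length = n ∧ ρ = x ++ w ++ y := by
    obtain ⟨x, y, h⟩ := h
    exact ⟨_, x, y, rfl, h.symm⟩
  obtain ⟨s, t, hs, hst⟩ := Nat.find_spec hex
  refine ⟨s, t, hst, ?_, fun x y hxy => hs ▸ Nat.find_min' hex ⟨x, y, rfl, hxy⟩⟩
  rintro ⟨a, b, rfl⟩
  have := Nat.find_min' hex ⟨a, b ++ w ++ t, rfl, by simp [hst]⟩
  have := List.length_pos_iff.2 hw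
  simp only [List.length_append] at hs
  omega

lemma suffix_of_append_eq_append {w s t x y : List R} (h : s ++ w ++ t = x ++ w ++ y)
    (hle : s.length ≤ x.length) : y <:+ t := by
  have hyt : y = t.drop (x.length - s.length) :=
    calc y = (x ++ w ++ y).drop (x ++ w).length := List.drop_left.symm
      _ = (s ++ w ++ t).drop ((s ++ w).length + (x.length - s.length)) := by
        rw [h]
        congr 1
        simp only [List.length_append]
        omega
      _ = t.drop (x.length - s.length) := by rw [← List.drop_drop, List.drop_left]
  exact hyt ▸ List.drop_suffix _ t

/-- Greedily cutting `ρ` at the first occurrence of `w` finds at least as many occurrences as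
any disjoint family. -/
lemma HasDisjointInfixes.exists_cWCyclic {w ρ : List R} {n : ℕ} (hw : ElementaryCycle w)
    (hn : HasDisjointInfixes w n ρ) : ∃ k, n ≤ k ∧ CWCyclic k w ρ := by
  induction hlen : ρ.length using Nat.strong_induction_on generalizing n ρ with
  | _ L ih =>
  by_cases hinf : w <:+: ρ
  · obtain ⟨s, t, rfl, hs, hmin⟩ :=
      exists_first_infix (List.ne_nil_of_length_pos hw.length_pos) hinf
    have ht : HasDisjointInfixes w (n - 1) t := by
      cases n with
      | zero => trivial
      | succ n =>
        obtain ⟨x, y, hxy, hy⟩ := hn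
        obtain ⟨z, rfl⟩ := suffix_of_append_eq_append hxy (hmin x y hxy)
        exact hy.append_left z
    have htlen : t.length < L := by
      rw [← hlen]
      simp only [List.length_append]
      have := hw.length_pos
      omega
    obtain ⟨k, hk, hkt⟩ := ih _ htlen ht rfl
    exact ⟨k + 1, by omega, hkt.append hs⟩
  · cases n with
    | zero => exact ⟨0, le_rfl, .zero hw hinf⟩
    | succ n =>
      obtain ⟨x, y, rfl, -⟩ := hn
      exact absurd ⟨x, y, rfl⟩ hinf

/-- Each block of `card R + 1` letters repeats a letter, so contains an elementary cycle. -/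
lemma exists_hasDisjointInfixes_sum_ge [Fintype R] : ∀ (m : ℕ) (ρ : List R),
    (Fintype.card R + 1) * m ≤ ρ.length →
    ∃ f : List R → ℕ,
      m ≤ ∑ w ∈ elementaryCycles R, f w ∧ ∀ w, HasDisjointInfixes w (f w) ρ
  | 0, _, _ => ⟨0, by simp, fun _ => trivial⟩
  | m + 1, ρ, hρ => by
    rw [Nat.mul_succ] at hρ
    obtain ⟨w₀, hw₀, a, b, hab⟩ := exists_elementaryCycle_infix
      (σ := ρ.take (Fintype.card R + 1)) fun h => by
        have := h.length_le_card
        rw [List.length_take] at this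
        omega
    obtain ⟨f, hsum, hf⟩ := exists_hasDisjointInfixes_sum_ge m (ρ.drop (Fintype.card R + 1))
      (by rw [List.length_drop]; omega)
    have hρ' : ρ = a ++ w₀ ++ (b ++ ρ.drop (Fintype.card R + 1)) := by
      rw [← List.append_assoc, hab, List.take_append_drop]
    refine ⟨f + Pi.single w₀ 1, ?_, fun w => ?_⟩
    · simp only [Pi.add_apply]
      rw [Finset.sum_add_distrib, Finset.sum_pi_single', if_pos (mem_elementaryCycles.2 hw₀)]
      omega
    · by_cases hw : w = w₀
      · subst hw
        rw [Pi.add_apply, Pi.single_eq_same]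
        exact ⟨a, _, hρ', (hf w).append_left b⟩
      · rw [Pi.add_apply, Pi.single_eq_of_ne hw, add_zero, hρ']
        simpa only [List.append_assoc] using (hf w).append_left (a ++ w₀ ++ b)

lemma exists_cWCyclic_of_length_ge [Fintype R] (c : ℕ) {ρ : List R}
    (hρ : (Fintype.card R + 1) * ((elementaryCycles R).card * c + 1) ≤ ρ.length) :
    ∃ k w, c < k ∧ CWCyclic k w ρ := by
  obtain ⟨f, hsum, hf⟩ := exists_hasDisjointInfixes_sum_ge _ ρ hρ
  obtain ⟨w, hwE, hw⟩ : ∃ w ∈ elementaryCycles R, c < f w :=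
    Finset.exists_lt_of_sum_lt (by simp only [Finset.sum_const, smul_eq_mul]; omega)
  obtain ⟨k, hk, hkw⟩ := (hf w).exists_cWCyclic (mem_elementaryCycles.1 hwE)
  exact ⟨k, w, by omega, hkw⟩

end Strings

namespace RT

variable {R : Type} {ar : R → ℕ}

def size : RT R ar → ℕ
  | node _ ts => 1 + ∑ i, size (ts i)

lemma size_child_lt {r : R} (ts : Fin (ar r) → RT R ar) (i : Fin (ar r)) :
    size (ts i) < size (node r ts) := by
  have := Finset.single_le_sum (fun j _ => Nat.zero_le (size (ts j))) (Finset.mem_univ i)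
  rw [size]
  omega

lemma height_lt_size (d : RT R ar) : height d < size d := by
  induction d with
  | node r ts ih =>
    have h : ∀ i ∈ Finset.univ, height (ts i) + 1 ≤ ∑ j, size (ts j) := fun i _ =>
      (ih i).trans_le
        (Finset.single_le_sum (fun j _ => Nat.zero_le (size (ts j))) (Finset.mem_univ i))
    have := Finset.sup_le h
    rw [height, size]
    omega

lemma finite_setOf_height_lt [Finite R] (n : ℕ) : {d : RT R ar | height d < n}.Finite := by
  induction n with
  | zero => simp
  | succ n ih =>
    have := ih.to_subtype
    refine (Set.finite_range fun x : Σ r, Fin (ar r) → {d : RT R ar | height d < n} =>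
      node x.1 fun i => (x.2 i).1).subset ?_
    rintro ⟨r, ts⟩ (hd : height _ < n + 1)
    refine ⟨⟨r, fun i => ⟨ts i, ?_⟩⟩, rfl⟩
    have := Finset.le_sup (f := fun i => height (ts i) + 1) (Finset.mem_univ i)
    change height (ts i) < n
    rw [height] at hd
    omega

lemma finite_setOf_size_le [Finite R] (n : ℕ) : {d : RT R ar | size d ≤ n}.Finite :=
  (finite_setOf_height_lt (n + 1)).subset fun d (hd : size d ≤ n) =>
    Nat.lt_succ_of_le ((height_lt_size d).le.trans hd)

@[simp] lemma subAt_nil (d : RT R ar) : subAt d [] = some d := by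
  cases d; rfl

lemma subAt_cons_eq_some {r : R} {ts : Fin (ar r) → RT R ar} {i : ℕ} {p : List ℕ}
    {t : RT R ar} :
    subAt (node r ts) (i :: p) = some t ↔ ∃ h : i < ar r, subAt (ts ⟨i, h⟩) p = some t := by
  simp [subAt]

lemma subAt_append (d : RT R ar) (p q : List ℕ) :
    subAt d (p ++ q) = (subAt d p).bind (subAt · q) := by
  induction p generalizing d with
  | nil => simp
  | cons i p ih =>
    obtain ⟨r, ts⟩ := d
    simp only [List.cons_append, subAt]
    split
    · exact ih _
    · rfl

lemma size_lt_of_subAt {d t : RT R ar} {p : List ℕ} (h : subAt d p = some t) (hp : p ≠ []) :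
    size t < size d := by
  induction p generalizing d with
  | nil => exact absurd rfl hp
  | cons i p ih =>
    obtain ⟨r, ts⟩ := d
    obtain ⟨hi, h⟩ := subAt_cons_eq_some.1 h
    refine lt_of_le_of_lt ?_ (size_child_lt ts ⟨i, hi⟩)
    rcases eq_or_ne p [] with rfl | hp
    · simp_all
    · exact (ih h hp).le

lemma seqTo_cons_eq_some {r : R} {ts : Fin (ar r) → RT R ar} {i : ℕ} {p : List ℕ}
    {ρ : List R} :
    seqTo (node r ts) (i :: p) = some ρ ↔
      ∃ h : i < ar r, ∃ ρ', seqTo (ts ⟨i, h⟩) p = some ρ' ∧ ρ = r :: ρ' := by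
  simp [seqTo, eq_comm]

lemma seqTo_length {d : RT R ar} {p : List ℕ} {ρ : List R} (h : seqTo d p = some ρ) :
    ρ.length = p.length + 1 := by
  induction p generalizing d ρ with
  | nil =>
    obtain ⟨r, ts⟩ := d
    obtain rfl : [r] = ρ := Option.some.inj h
    rfl
  | cons i p ih =>
    obtain ⟨r, ts⟩ := d
    obtain ⟨hi, ρ', hρ', rfl⟩ := seqTo_cons_eq_some.1 h
    simp [ih hρ']

lemma seqTo_head? {d : RT R ar} {p : List ℕ} {ρ : List R} (h : seqTo d p = some ρ) :
    ρ.head? = some d.rootRule := by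
  obtain ⟨r, ts⟩ := d
  cases p with
  | nil =>
    obtain rfl : [r] = ρ := Option.some.inj h
    rfl
  | cons i p =>
    obtain ⟨hi, ρ', h, rfl⟩ := seqTo_cons_eq_some.1 h
    rfl

lemma exists_seqTo_of_subAt {d t : RT R ar} {p : List ℕ} (h : subAt d p = some t) :
    ∃ ρ, seqTo d p = some ρ ∧ ρ.getLast? = some t.rootRule := by
  induction p generalizing d with
  | nil =>
    obtain ⟨r, ts⟩ := d
    obtain rfl : node r ts = t := Option.some.inj h
    exact ⟨[r], rfl, rfl⟩
  | cons i p ih =>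
    obtain ⟨r, ts⟩ := d
    obtain ⟨hi, h⟩ := subAt_cons_eq_some.1 h
    obtain ⟨ρ, hρ, hlast⟩ := ih h
    refine ⟨r :: ρ, seqTo_cons_eq_some.2 ⟨hi, ρ, hρ, rfl⟩, ?_⟩
    rw [List.getLast?_cons, hlast]
    rfl

lemma LeafAt.exists_seqTo {d : RT R ar} {p : List ℕ} (h : LeafAt d p) :
    ∃ ρ, seqTo d p = some ρ :=
  let ⟨_, hs, _⟩ := h
  (exists_seqTo_of_subAt hs).imp fun _ h => h.1

lemma seqTo_drop {d : RT R ar} {p : List ℕ} {ρ : List R} (h : seqTo d p = some ρ) {k : ℕ}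
    (hk : k ≤ p.length) :
    ∃ t, subAt d (p.take k) = some t ∧ seqTo t (p.drop k) = some (ρ.drop k) := by
  induction k generalizing d p ρ with
  | zero => exact ⟨d, by simp, by simpa using h⟩
  | succ k ih =>
    obtain ⟨r, ts⟩ := d
    cases p with
    | nil => simp at hk
    | cons i p =>
      obtain ⟨hi, ρ', hρ', rfl⟩ := seqTo_cons_eq_some.1 h
      obtain ⟨t, ht, htρ⟩ := ih hρ' (by simpa using hk)
      exact ⟨t, subAt_cons_eq_some.2 ⟨hi, ht⟩, htρ⟩

lemma exists_leafAt_height_le (d : RT R ar) : ∃ p, LeafAt d p ∧ height d ≤ p.length := by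
  induction d with
  | node r ts ih =>
    rcases Nat.eq_zero_or_pos (ar r) with h0 | hpos
    · refine ⟨[], ⟨node r ts, rfl, h0⟩, ?_⟩
      have : IsEmpty (Fin (ar r)) := by rw [h0]; infer_instance
      simp [height]
    · obtain ⟨i, -, hi⟩ :=
        Finset.exists_mem_eq_sup Finset.univ ⟨⟨0, hpos⟩, Finset.mem_univ _⟩
        fun i => height (ts i) + 1
      obtain ⟨p, ⟨t, ht, ht0⟩, hp⟩ := ih i
      refine ⟨i :: p, ⟨t, subAt_cons_eq_some.2 ⟨i.2, ht⟩, ht0⟩, ?_⟩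
      rw [height, hi, List.length_cons]
      omega

@[simp] lemma replaceAt_nil (d x : RT R ar) : replaceAt d [] x = x := by
  cases d; rfl

lemma replaceAt_cons_of_lt {r : R} {ts : Fin (ar r) → RT R ar} {i : ℕ} (hi : i < ar r)
    (p : List ℕ) (x : RT R ar) :
    replaceAt (node r ts) (i :: p) x =
      node r (Function.update ts ⟨i, hi⟩ (replaceAt (ts ⟨i, hi⟩) p x)) := by
  rw [replaceAt]
  congr 1
  funext j
  rcases eq_or_ne j ⟨i, hi⟩ with rfl | hj
  · simp
  · rw [Function.update_of_ne hj, if_neg fun h => hj (Fin.ext h)]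

lemma subAt_replaceAt {d t : RT R ar} {p : List ℕ} (h : subAt d p = some t) (x : RT R ar) :
    subAt (replaceAt d p x) p = some x := by
  induction p generalizing d with
  | nil => simp
  | cons i p ih =>
    obtain ⟨r, ts⟩ := d
    obtain ⟨hi, h⟩ := subAt_cons_eq_some.1 h
    rw [replaceAt_cons_of_lt hi, subAt_cons_eq_some]
    exact ⟨hi, by simpa using ih h⟩

lemma replaceAt_injective {d t : RT R ar} {p : List ℕ} (h : subAt d p = some t) :
    Function.Injective (replaceAt d p) := fun x y hxy =>
  Option.some.inj ((subAt_replaceAt h x).symm.trans (hxy ▸ subAt_replaceAt h y))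

lemma replaceAt_append {d t : RT R ar} {p : List ℕ} (h : subAt d p = some t) (q : List ℕ)
    (x : RT R ar) : replaceAt d (p ++ q) x = replaceAt d p (replaceAt t q x) := by
  induction p generalizing d with
  | nil => simp_all
  | cons i p ih =>
    obtain ⟨r, ts⟩ := d
    obtain ⟨hi, h⟩ := subAt_cons_eq_some.1 h
    rw [List.cons_append, replaceAt_cons_of_lt hi, replaceAt_cons_of_lt hi, ih h]

lemma replaceAt_replaceAt {d t : RT R ar} {p : List ℕ} (h : subAt d p = some t)
    (x y : RT R ar) : replaceAt (replaceAt d p x) p y = replaceAt d p y := by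
  induction p generalizing d with
  | nil => simp
  | cons i p ih =>
    obtain ⟨r, ts⟩ := d
    obtain ⟨hi, h⟩ := subAt_cons_eq_some.1 h
    simp [replaceAt_cons_of_lt hi, ih h]

lemma size_replaceAt_lt {d t x : RT R ar} {p : List ℕ} (h : subAt d p = some t)
    (hx : size x < size t) : size (replaceAt d p x) < size d := by
  induction p generalizing d with
  | nil => simp_all
  | cons i p ih =>
    obtain ⟨r, ts⟩ := d
    obtain ⟨hi, h⟩ := subAt_cons_eq_some.1 h
    rw [replaceAt_cons_of_lt hi, size, size, add_lt_add_iff_left]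
    refine Finset.sum_lt_sum (fun j _ => ?_)
      ⟨⟨i, hi⟩, Finset.mem_univ _, by simpa using ih h⟩
    rcases eq_or_ne j ⟨i, hi⟩ with rfl | hj
    · simpa using (ih h).le
    · rw [Function.update_of_ne hj]

end RT

section WellSorted

variable {N R : Type} {lhs : R → N} {rhs : R → List N}

lemma WellSorted.subAt {d t : RT R fun r => (rhs r).length} {p : List ℕ}
    (hd : WellSorted lhs rhs d) (h : d.subAt p = some t) : WellSorted lhs rhs t := by
  induction p generalizing d with
  | nil =>
    obtain rfl := Option.some.inj ((RT.subAt_nil d).symm.trans h)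
    exact hd
  | cons i p ih =>
    cases hd with
    | node r ts _ hrec =>
      obtain ⟨hi, h⟩ := RT.subAt_cons_eq_some.1 h
      exact ih (hrec _) h

lemma WellSorted.replaceAt {d t x : RT R fun r => (rhs r).length} {p : List ℕ}
    (hd : WellSorted lhs rhs d) (h : d.subAt p = some t) (hx : WellSorted lhs rhs x)
    (hxt : lhs x.rootRule = lhs t.rootRule) : WellSorted lhs rhs (d.replaceAt p x) := by
  induction p generalizing d with
  | nil => simpa using hx
  | cons i p ih =>
    cases hd with
    | node r ts hsort hrec =>
      obtain ⟨hi, h⟩ := RT.subAt_cons_eq_some.1 h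
      rw [RT.replaceAt_cons_of_lt (ar := fun r => (rhs r).length) hi]
      have hroot :
          lhs ((ts ⟨i, hi⟩).replaceAt p x).rootRule = lhs (ts ⟨i, hi⟩).rootRule := by
        cases p with
        | nil =>
          obtain rfl := Option.some.inj ((RT.subAt_nil _).symm.trans h)
          rw [RT.replaceAt_nil]
          exact hxt
        | cons => cases ts ⟨i, hi⟩; rfl
      refine .node r _ (fun j => ?_) (fun j => ?_) <;>
        rcases eq_or_ne j ⟨i, hi⟩ with rfl | hj
      · rw [Function.update_self, hroot, hsort]
      · rw [Function.update_of_ne hj, hsort]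
      · rw [Function.update_self]
        exact ih (hrec _) h
      · rw [Function.update_of_ne hj]
        exact hrec j

end WellSorted

section Cuts

variable {R : Type} {ar : R → ℕ} {w : List R}

lemma CutW.size_lt {d d' : RT R ar} (hw : 1 < w.length) (h : CutW w d d') :
    d'.size < d.size := by
  obtain ⟨p, q, t, s, hdp, hts, hseq, rfl⟩ := h
  have hq : q ≠ [] := by
    rintro rfl
    have := RT.seqTo_length hseq
    simp only [List.length_nil] at this
    omega
  exact RT.size_replaceAt_lt hdp (RT.size_lt_of_subAt hts hq)

lemma CutW.replaceAt {d t t' : RT R ar} {p : List ℕ} (hdp : d.subAt p = some t)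
    (h : CutW w t t') : CutW w d (d.replaceAt p t') := by
  obtain ⟨p', q, t₀, s, ht₀, hs, hseq, rfl⟩ := h
  exact ⟨p ++ p', q, t₀, s, by rw [RT.subAt_append, hdp]; exact ht₀, hs, hseq,
    (RT.replaceAt_append hdp p' s).symm⟩

/-- The subtree moved up has the same root rule as the one it replaces. -/
lemma CutW.wellSorted {N : Type} {lhs : R → N} {rhs : R → List N}
    {d d' : RT R fun r => (rhs r).length} (hw : w.head? = w.getLast?)
    (hd : WellSorted lhs rhs d) (h : CutW w d d') : WellSorted lhs rhs d' := by
  obtain ⟨p, q, t, s, hdp, hts, hseq, rfl⟩ := h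
  obtain ⟨ρ, hρ, hlast⟩ := RT.exists_seqTo_of_subAt hts
  obtain rfl : w = ρ := Option.some.inj (hseq.symm.trans hρ)
  have hroot : t.rootRule = s.rootRule :=
    Option.some.inj ((RT.seqTo_head? hseq).symm.trans (hw.trans hlast))
  exact hd.replaceAt hdp ((hd.subAt hdp).subAt hts) (by rw [hroot])

lemma size_lt_of_mem_cotreesW {d d' : RT R ar} (hw : 1 < w.length) (h : d' ∈ cotreesW w d) :
    d'.size < d.size := by
  induction h with
  | single h => exact h.size_lt hw
  | tail _ h ih => exact (h.size_lt hw).trans ih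

lemma cotreesW_finite [Finite R] (hw : 1 < w.length) (d : RT R ar) : (cotreesW w d).Finite :=
  (RT.finite_setOf_size_le d.size).subset fun _ h => (size_lt_of_mem_cotreesW hw h).le

lemma wellSorted_of_mem_cotreesW {N : Type} {lhs : R → N} {rhs : R → List N}
    {d d' : RT R fun r => (rhs r).length} (hw : w.head? = w.getLast?)
    (hd : WellSorted lhs rhs d) (h : d' ∈ cotreesW w d) : WellSorted lhs rhs d' := by
  induction h with
  | single h => exact h.wellSorted hw hd
  | tail _ h ih => exact h.wellSorted hw ih

lemma replaceAt_mem_cotreesW {d t t' : RT R ar} {p : List ℕ} (hdp : d.subAt p = some t)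
    (h : t' ∈ cotreesW w t) : d.replaceAt p t' ∈ cotreesW w d := by
  induction h with
  | single h => exact .single (h.replaceAt hdp)
  | @tail b _ _ h ih =>
    have := h.replaceAt (RT.subAt_replaceAt hdp b)
    rw [RT.replaceAt_replaceAt hdp] at this
    exact .tail ih this

lemma cotreesW_subset_cotrees (hw : ElementaryCycle w) (d : RT R ar) :
    cotreesW w d ⊆ cotrees d :=
  fun _ => Relation.TransGen.mono (fun _ _ h => ⟨w, hw, h⟩) _ _

end Cuts

section TreeCyclicity

variable {R : Type} {ar : R → ℕ}

def LeafCyclicityLE (c : ℕ) (d : RT R ar) : Prop :=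
  ∀ p ρ k w, RT.LeafAt d p → RT.seqTo d p = some ρ → CWCyclic k w ρ → k ≤ c

/-- The cyclicity of a tree is the largest cyclicity of its leaves; every leaf has one, since
`[a, a]`-decompositions always exist. -/
lemma exists_treeC_le_iff {c : ℕ} {d : RT R ar} :
    (∃ c' ≤ c, TreeC c' d) ↔ LeafCyclicityLE c d := by
  constructor
  · rintro ⟨c', hc', hd⟩ p ρ k w hp hρ hk
    by_contra hkc
    obtain ⟨m, hkm, hm⟩ := hk.exists_cCyclic_ge
    exact hd.2 m (by omega) p ⟨hp, ρ, hρ, hm⟩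
  · intro h
    let P k := ∃ p, LeafC k d p
    obtain ⟨p, hp, -⟩ := RT.exists_leafAt_height_le d
    obtain ⟨ρ, hρ⟩ := hp.exists_seqTo
    obtain ⟨k, -, hk⟩ := HasDisjointInfixes.exists_cWCyclic (elementaryCycle_pair d.rootRule)
      (n := 0) (ρ := ρ) trivial
    obtain ⟨m, -, hm⟩ := hk.exists_cCyclic_ge
    obtain ⟨w, hw⟩ := hm.1
    have hmc : m ≤ c := h p ρ m w hp hρ hw
    refine ⟨Nat.findGreatest P c, Nat.findGreatest_le c,
      Nat.findGreatest_spec (P := P) hmc ⟨p, hp, ρ, hρ, hm⟩, fun c' hc' q hq => ?_⟩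
    rcases le_or_gt c' c with hc'c | hc'c
    · exact Nat.findGreatest_is_greatest hc' hc'c ⟨q, hq⟩
    · obtain ⟨hq, ρ', hρ', ⟨w', hw'⟩, -⟩ := hq
      exact absurd (h q ρ' c' w' hq hρ' hw') (by omega)

lemma mem_TRcset_iff {N : Type} {lhs : R → N} {rhs : R → List N} {c : ℕ}
    {d : RT R fun r => (rhs r).length} :
    d ∈ TRcset lhs rhs c ↔ WellSorted lhs rhs d ∧ LeafCyclicityLE c d :=
  and_congr_right fun _ => exists_treeC_le_iff

lemma LeafCyclicityLE.height_lt [Fintype R] {c : ℕ} {d : RT R ar}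
    (h : LeafCyclicityLE c d) :
    d.height < (Fintype.card R + 1) * ((elementaryCycles R).card * c + 1) := by
  obtain ⟨p, hp, hhp⟩ := RT.exists_leafAt_height_le d
  obtain ⟨ρ, hρ⟩ := hp.exists_seqTo
  by_contra! hge
  obtain ⟨k, w, hck, hk⟩ := exists_cWCyclic_of_length_ge c (ρ := ρ) (by
    rw [RT.seqTo_length hρ]
    omega)
  exact absurd (h p ρ k w hp hρ hk) (by omega)

lemma TRcset_finite [Fintype R] {N : Type} (lhs : R → N) (rhs : R → List N) (c : ℕ) :
    (TRcset lhs rhs c).Finite :=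
  (RT.finite_setOf_height_lt _).subset fun _ hd => (mem_TRcset_iff.1 hd).2.height_lt

/-- A leaf that is more than `c`-cyclic has a suffix of its label sequence that is
`(c + 1, w)`-cyclic; it is the label sequence of a leaf of a subtree. -/
lemma exists_subAt_leafCW_succ {c : ℕ} {d : RT R ar} (h : ¬ LeafCyclicityLE c d) :
    ∃ p t w, d.subAt p = some t ∧ ElementaryCycle w ∧ ∃ q, LeafCW (c + 1) w t q := by
  simp only [LeafCyclicityLE, not_forall, not_le] at h
  obtain ⟨p, ρ, k, w, ⟨s, hs, hs0⟩, hρ, hk, hck⟩ := h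
  obtain ⟨ρ', ⟨pre, rfl⟩, hρ'⟩ := hk.exists_suffix (k := c + 1) (by omega)
  have hlen := RT.seqTo_length hρ
  have := hρ'.length_le
  simp only [List.length_append] at hlen
  obtain ⟨t, ht, htρ⟩ := RT.seqTo_drop hρ (k := pre.length) (by omega)
  refine ⟨_, t, w, ht, hρ'.1, p.drop pre.length, ⟨s, ?_, hs0⟩, ρ', by simpa using htρ,
    hρ'⟩
  have := RT.subAt_append d (p.take pre.length) (p.drop pre.length)
  rwa [List.take_append_drop, hs, ht, Option.bind_some, eq_comm] at this

end TreeCyclicity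

section Weights

variable {K : Type} [AddCommMonoid K] {Ω : ∀ n : ℕ, Set ((Fin n → K) → K)}

def DistributiveOps.argHom (hΩ : DistributiveOps Ω) {n : ℕ} {ω : (Fin n → K) → K}
    (hω : ω ∈ Ω n) (x : Fin n → K) (i : Fin n) : K →+ K where
  toFun a := ω (Function.update x i a)
  map_zero' := (hΩ n ω hω).2 _ ⟨i, Function.update_self _ _ _⟩
  map_add' := (hΩ n ω hω).1 x i

variable {R : Type} {ar : R → ℕ} {wt : ∀ r : R, (Fin (ar r) → K) → K}

lemma exists_addMonoidHom_wtval_replaceAt (hΩ : DistributiveOps Ω)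
    (hwt : ∀ r, wt r ∈ Ω (ar r)) {d t : RT R ar} {p : List ℕ} (h : d.subAt p = some t) :
    ∃ φ : K →+ K,
      wtval wt d = φ (wtval wt t) ∧ ∀ x, wtval wt (d.replaceAt p x) = φ (wtval wt x) := by
  induction p generalizing d with
  | nil =>
    obtain rfl := Option.some.inj ((RT.subAt_nil d).symm.trans h)
    exact ⟨.id K, rfl, fun x => by simp⟩
  | cons i p ih =>
    obtain ⟨r, ts⟩ := d
    obtain ⟨hi, h⟩ := RT.subAt_cons_eq_some.1 h
    obtain ⟨φ, hφt, hφ⟩ := ih h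
    let ψ := hΩ.argHom (hwt r) (fun j => wtval wt (ts j)) ⟨i, hi⟩
    refine ⟨ψ.comp φ, ?_, fun x => ?_⟩
    · change wt r _ = wt r _
      rw [← hφt, Function.update_eq_self]
    · rw [RT.replaceAt_cons_of_lt hi, AddMonoidHom.comp_apply, ← hφ]
      exact congrArg (wt r) (Function.comp_update (wtval wt) ts ⟨i, hi⟩ _)

lemma wtval_add_sum_replaceAt (hΩ : DistributiveOps Ω) (hwt : ∀ r, wt r ∈ Ω (ar r))
    {d t : RT R ar} {p : List ℕ} (h : d.subAt p = some t) {s : Finset (RT R ar)}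
    (hs : wtval wt t + ∑ x ∈ s, wtval wt x = ∑ x ∈ s, wtval wt x) :
    wtval wt d + ∑ x ∈ s.image (d.replaceAt p), wtval wt x =
      ∑ x ∈ s.image (d.replaceAt p), wtval wt x := by
  obtain ⟨φ, hd, hφ⟩ := exists_addMonoidHom_wtval_replaceAt hΩ hwt h
  rw [Finset.sum_image fun x _ y _ hxy => RT.replaceAt_injective h hxy]
  simp only [hd, hφ, ← map_sum, ← map_add, hs]

end Weights

/-- The summands of `s` in `D` already occur in `F`, and those outside are absorbed. -/
lemma add_eq_self_of_add_sum_eq_sum {K ι : Type} [AddCommMonoid K] [DecidableEq ι]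
    {g : ι → K} {D s : Finset ι} {F k : K} (hF : F = ∑ x ∈ D, g x)
    (hk : k + ∑ x ∈ s, g x = ∑ x ∈ s, g x) (hs : ∀ x ∈ s, x ∉ D → F + g x = F) :
    F + k = F := by
  set a := ∑ x ∈ s with x ∈ D, g x
  set b := ∑ x ∈ s with x ∉ D, g x
  have hFa : F = ∑ x ∈ D \ s.filter (· ∈ D), g x + a := by
    rw [Finset.sum_sdiff fun x hx => (Finset.mem_filter.1 hx).2, hF]
  have hFb : F + b = F :=
    Finset.sum_induction _ (F + · = F) (fun _ _ h₁ h₂ => by rw [← add_assoc, h₁, h₂])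
      (add_zero F) fun x hx => hs x (Finset.mem_filter.1 hx).1 (Finset.mem_filter.1 hx).2
  rw [← Finset.sum_filter_add_sum_filter_not s (· ∈ D)] at hk
  calc F + k = F + b + k := by rw [hFb]
    _ = ∑ x ∈ D \ s.filter (· ∈ D), g x + (k + (a + b)) := by rw [hFa]; abel
    _ = F + b := by rw [hk, hFa]; abel
    _ = F := hFb

section InfSum

variable {K : Type} [AddCommMonoid K] (S : InfSum K)

lemma InfSum.isum_comp_equiv {I J : Type} [Countable I] [Countable J] (e : I ≃ J)
    (f : J → K) : S.isum (f ∘ e) = S.isum f := by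
  rw [S.isum_partition (f ∘ e) e]
  congr 1
  funext j
  have hj : ∀ i : {i // e i = j}, i = ⟨e.symm j, e.apply_symm_apply j⟩ := fun i =>
    Subtype.ext (e.eq_symm_apply.2 i.2)
  rw [S.isum_single _ _ hj]
  simp

lemma InfSum.isum_eq_add_isum_diff_singleton {α : Type} [Countable α] (f : α → K)
    {E : Set α} {a : α} (ha : a ∈ E) :
    S.isum (fun x : E => f x) = f a + S.isum (fun x : ↥(E \ {a}) => f x) := by
  rw [S.isum_partition _ fun x : E => decide (x.1 = a),
    S.isum_pair _ true false (by decide) fun b => by cases b <;> simp]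
  congr 1
  · have hx : ∀ x : {x : E // decide (x.1 = a) = true}, x = ⟨⟨a, ha⟩, by simp⟩ :=
      fun x => Subtype.ext (Subtype.ext (by simpa using x.2))
    rw [S.isum_single _ _ hx]
  · let e : {x : E // decide (x.1 = a) = false} ≃ ↥(E \ {a}) :=
      { toFun x := ⟨x.1.1, x.1.2, by simpa using x.2⟩
        invFun y := ⟨⟨y.1, y.2.1⟩, by simpa using y.2.2⟩
        left_inv _ := rfl
        right_inv _ := rfl }
    exact S.isum_comp_equiv e fun y => f y

lemma InfSum.add_isum_eq_add_isum_diff {α : Type} [Countable α] (f : α → K) {F : K}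
    {E B : Set α} (hB : B.Finite) (hBE : B ⊆ E) (h : ∀ x ∈ B, F + f x = F) :
    F + S.isum (fun x : E => f x) = F + S.isum (fun x : ↥(E \ B) => f x) := by
  induction B, hB using Set.Finite.induction_on with
  | empty => rw [Set.sdiff_empty]
  | @insert a B ha _ ih =>
    have haE : a ∈ E \ B := ⟨hBE (Set.mem_insert a B), ha⟩
    rw [ih ((Set.subset_insert a B).trans hBE) fun x hx => h x (Set.mem_insert_of_mem a hx),
      S.isum_eq_add_isum_diff_singleton f haE, ← add_assoc, h a (Set.mem_insert a B),
      Set.sdiff_sdiff, Set.union_singleton]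

end InfSum

lemma finsum_add_wtval_eq_self {N R K : Type} [Fintype R] [AddCommMonoid K] {lhs : R → N}
    {rhs : R → List N} {Ω : ∀ n : ℕ, Set ((Fin n → K) → K)} (hΩd : DistributiveOps Ω)
    {wt : ∀ r : R, (Fin (rhs r).length → K) → K} (hwt : ∀ r : R, wt r ∈ Ω (rhs r).length)
    {c : ℕ} (hclosed : CClosed lhs rhs wt c) {D : Set (RT R fun r => (rhs r).length)}
    (hD : D ⊆ TRcset lhs rhs c) {d : RT R fun r => (rhs r).length} (hd : WellSorted lhs rhs d)
    (hdc : d ∉ TRcset lhs rhs c) (hco : cotrees d ∩ TRcset lhs rhs c ⊆ D) :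
    (∑ᶠ x ∈ D, wtval wt x) + wtval wt d = ∑ᶠ x ∈ D, wtval wt x := by
  induction hn : d.size using Nat.strong_induction_on generalizing d with
  | _ n ih =>
  obtain ⟨p, t, w, hdp, hw, hleaf⟩ :=
    exists_subAt_leafCW_succ fun h => hdc (mem_TRcset_iff.2 ⟨hd, h⟩)
  have hfin := cotreesW_finite hw.1 t
  have hDfin := (TRcset_finite lhs rhs c).subset hD
  have ht := hclosed t (hd.subAt hdp) w hw hleaf
  rw [finsum_mem_eq_finite_toFinset_sum _ hfin] at ht
  refine add_eq_self_of_add_sum_eq_sum (finsum_mem_eq_finite_toFinset_sum _ hDfin)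
    (wtval_add_sum_replaceAt hΩd hwt hdp ht) fun x hx hxD => ?_
  obtain ⟨t', ht', rfl⟩ := Finset.mem_image.1 hx
  have hcut := replaceAt_mem_cotreesW hdp ((Set.Finite.mem_toFinset _).1 ht')
  have hxco := cotreesW_subset_cotrees hw d hcut
  exact ih _ (hn ▸ size_lt_of_mem_cotreesW hw.1 hcut) (wellSorted_of_mem_cotreesW hw.2.1 hd hcut)
    (fun h => hxD ((Set.Finite.mem_toFinset _).2 (hco ⟨hxco, h⟩)))
    (fun y hy => hco ⟨hxco.trans hy.1, hy.2⟩) rfl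

theorem outside_trees_subsumed_general {N R K : Type} [Fintype R]
    [AddCommMonoid K] (lhs : R → N) (rhs : R → List N)
    [Countable (RT R fun r => (rhs r).length)]
    (S : InfSum K)
    (Ω : ∀ n : ℕ, Set ((Fin n → K) → K)) (hΩd : DistributiveOps Ω)
    (wt : ∀ r : R, (Fin (rhs r).length → K) → K) (hwt : ∀ r : R, wt r ∈ Ω (rhs r).length)
    (c : ℕ) (hclosed : CClosed lhs rhs wt c) :
    ∀ (l : ℕ) (D D' : Set (RT R fun r => (rhs r).length)),
      D ⊆ TRcset lhs rhs c → D' ⊆ TRset lhs rhs \ TRcset lhs rhs c →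
      (∀ d ∈ D', cotrees d ∩ TRcset lhs rhs c ⊆ D) →
      ∀ B : Set (RT R fun r => (rhs r).length), B ⊆ D' → B.Finite → B.ncard = l →
        ((∑ᶠ d ∈ D, wtval wt d) + S.isum fun d : ↥D' => wtval wt d.1)
          = (∑ᶠ d ∈ D, wtval wt d) + S.isum fun d : ↥(D' \ B) => wtval wt d.1 := by
  intro _ D D' hD hD' hco B hBD' hB _
  refine S.add_isum_eq_add_isum_diff _ hB hBD' fun d hdB => ?_
  obtain ⟨hd, hdc⟩ := hD' (hBD' hdB)
  exact finsum_add_wtval_eq_self hΩd hwt hclosed hD hd hdc (hco d (hBD' hdB))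

/-- Theorem (outside trees subsumed): in a `c`-closed weighted system, any finite set `B`
of trees outside `T_R^{(c)}` may be removed from the infinitary summation over `D'` as
long as all their at most `c`-cyclic cutout trees remain in the finite summation over
`D`. -/
theorem outside_trees_subsumed {N R K : Type} [Fintype N] [Nonempty N] [Fintype R]
    [AddCommMonoid K] (lhs : R → N) (rhs : R → List N)
    [Countable (RT R fun r => (rhs r).length)]
    (S : InfSum K) (hdc : S.DComplete)
    (Ω : ∀ n : ℕ, Set ((Fin n → K) → K)) (hΩ0 : HasZeroOps Ω) (hΩd : DistributiveOps Ω)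
    (wt : ∀ r : R, (Fin (rhs r).length → K) → K) (hwt : ∀ r : R, wt r ∈ Ω (rhs r).length)
    (c : ℕ) (hclosed : CClosed lhs rhs wt c) :
    ∀ (l : ℕ) (D D' : Set (RT R fun r => (rhs r).length)),
      D ⊆ TRcset lhs rhs c → D' ⊆ TRset lhs rhs \ TRcset lhs rhs c →
      (∀ d ∈ D', cotrees d ∩ TRcset lhs rhs c ⊆ D) →
      ∀ B : Set (RT R fun r => (rhs r).length), B ⊆ D' → B.Finite → B.ncard = l →
        ((∑ᶠ d ∈ D, wtval wt d) + S.isum fun d : ↥D' => wtval wt d.1)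
          = (∑ᶠ d ∈ D, wtval wt d) + S.isum fun d : ↥(D' \ B) => wtval wt d.1 :=
  outside_trees_subsumed_general lhs rhs S Ω hΩd wt hwt c hclosed
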